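/- arXiv:2406.10473 — 5 statements merged into one kernel-verified Lean document; each statement's English description precedes it below -/
import Mathlib

section
/- In a completely randomized two-arm experiment with n units, n_a assigned to arm A and n_b = n − n_a to arm B, with potential outcome pairs (a_i, b_i), the covariance of the two observed arm means is Cov(ā_obs, b̄_obs) = −(1/(n − 1)) σ_ab, where σ_ab = (1/n)∑_i (a_i − ā)(b_i − b̄). -/
/-! Centre the outcomes: with `α = a - ā` and `β = b - b̄`, the deviations of the two arm means
are `(∑_{i ∈ S} α i) / n_a` and `(∑_{j ∉ S} β j) / n_b`. Expanding their product over all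
assignments `S`, an ordered pair `(i, j)` with `i ≠ j` is counted by the `C(n-2, n_a-1)` sets
containing `i` but not `j`, while diagonal pairs are never counted. Since `∑ α = ∑ β = 0`, the
total is `-C(n-2, n_a-1) ∑ α i β i`, and `C(n-2, n_a-1) n (n-1) = C(n, n_a) n_a n_b` turns this
into `-σ_ab / (n-1)` after dividing by the number `C(n, n_a)` of assignments. -/

open Finset

theorem card_filter_mem_notMem_powersetCard {ι : Type*} [Fintype ι] [DecidableEq ι]
    {i j : ι} (hij : i ≠ j) (k : ℕ) :
    #{S ∈ powersetCard (k + 1) (univ : Finset ι) | i ∈ S ∧ j ∉ S} =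
      (Fintype.card ι - 2).choose k := by
  have hcard : #((univ.erase i).erase j) = Fintype.card ι - 2 := by
    rw [card_erase_of_mem (by simp [hij.symm]), card_erase_of_mem (mem_univ i), card_univ]
    omega
  rw [← hcard, ← card_powersetCard]
  refine card_bij' (fun S _ => S.erase i) (fun T _ => insert i T) ?_ ?_ ?_ ?_ <;>
    simp only [mem_filter, mem_powersetCard] <;> intro S hS
  · grind
  · grind
  · exact insert_erase hS.2.1
  · exact erase_insert fun h => by simpa using hS.1 h

theorem sum_powersetCard_sum_mul_sum_compl {ι R : Type*} [Fintype ι] [DecidableEq ι]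
    [CommRing R] (k : ℕ) (α β : ι → R) :
    ∑ S ∈ powersetCard (k + 1) (univ : Finset ι), (∑ i ∈ S, α i) * ∑ j ∈ Sᶜ, β j =
      ((Fintype.card ι - 2).choose k : R) *
        ((∑ i, α i) * (∑ j, β j) - ∑ i, α i * β i) := by
  set c : R := (((Fintype.card ι - 2).choose k : ℕ) : R)
  have hcount (i j : ι) :
      ∑ S ∈ powersetCard (k + 1) univ, (if i ∈ S ∧ j ∈ Sᶜ then α i * β j else 0) =
        c * (α i * β j) - if i = j then c * (α i * β j) else 0 := by
    rw [← sum_filter, sum_const, nsmul_eq_mul]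
    by_cases hij : i = j
    · simp [hij]
    · simp [hij, card_filter_mem_notMem_powersetCard hij, c]
  calc ∑ S ∈ powersetCard (k + 1) univ, (∑ i ∈ S, α i) * ∑ j ∈ Sᶜ, β j
      = ∑ S ∈ powersetCard (k + 1) univ, ∑ i, ∑ j,
          if i ∈ S ∧ j ∈ Sᶜ then α i * β j else 0 := by
        refine sum_congr rfl fun S _ => ?_
        simp only [sum_mul_sum, ite_and, sum_ite_irrel, sum_const_zero, sum_ite_mem, univ_inter]
    _ = ∑ i, ∑ j, (c * (α i * β j) - if i = j then c * (α i * β j) else 0) := by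
        rw [sum_comm]
        simp_rw [sum_comm (s := powersetCard _ _), hcount]
    _ = c * ((∑ i, α i) * (∑ j, β j) - ∑ i, α i * β i) := by
        simp only [sum_sub_distrib, sum_ite_eq, mem_univ, if_true, sum_mul, mul_sum, mul_sub]
        rw [sum_comm]

theorem choose_mul_add_two_mul_add_one (k l : ℕ) :
    (k + l).choose k * ((k + l + 2) * (k + l + 1)) =
      (k + l + 2).choose (k + 1) * ((k + 1) * (l + 1)) := by
  have hsucc : (k + l).choose k * (k + l + 1) = (k + l + 1).choose k * (l + 1) := by
    rw [Nat.choose_mul_succ_eq, show k + l + 1 - k = l + 1 by omega]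
  calc (k + l).choose k * ((k + l + 2) * (k + l + 1))
      = (k + l + 2) * ((k + l).choose k * (k + l + 1)) := by ring
    _ = (k + l + 2) * (k + l + 1).choose k * (l + 1) := by rw [hsucc, mul_assoc]
    _ = (k + l + 2).choose (k + 1) * ((k + 1) * (l + 1)) := by
        rw [Nat.add_one_mul_choose_eq]; ring

theorem sum_div_card_sub {ι K : Type*} [Field K] [CharZero K] {s : Finset ι}
    (hs : s.Nonempty) (f : ι → K) (c : K) :
    (∑ i ∈ s, f i) / #s - c = (∑ i ∈ s, (f i - c)) / #s := by
  have : (#s : K) ≠ 0 := by simpa using hs.ne_empty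
  rw [sum_sub_distrib, sum_const, nsmul_eq_mul]
  field_simp

theorem sum_sub_sum_div_card {ι K : Type*} [Field K] [CharZero K] (s : Finset ι) (f : ι → K) :
    ∑ i ∈ s, (f i - (∑ j ∈ s, f j) / #s) = 0 := by
  rcases s.eq_empty_or_nonempty with rfl | hs
  · simp
  · have : (#s : K) ≠ 0 := by simpa using hs.ne_empty
    rw [sum_sub_distrib, sum_const, nsmul_eq_mul]
    field_simp
    ring

theorem sum_powersetCard_sub_mean_mul_sub_mean {ι : Type*} [Fintype ι] [DecidableEq ι]
    (k l : ℕ) (hcard : Fintype.card ι = k + l + 2) (a b : ι → ℝ) :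
    ∑ S ∈ powersetCard (k + 1) univ,
        ((∑ i ∈ S, a i) / (k + 1 : ℕ) - (∑ i, a i) / Fintype.card ι) *
          ((∑ i ∈ Sᶜ, b i) / (l + 1 : ℕ) - (∑ i, b i) / Fintype.card ι) =
      -((k + l).choose k : ℝ) *
          (∑ i, (a i - (∑ j, a j) / Fintype.card ι) * (b i - (∑ j, b j) / Fintype.card ι)) /
        ((k + 1 : ℕ) * (l + 1 : ℕ)) := by
  set α : ι → ℝ := fun i => a i - (∑ j, a j) / Fintype.card ι
  set β : ι → ℝ := fun i => b i - (∑ j, b j) / Fintype.card ι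
  have hα : ∑ i, α i = 0 := by simpa only [card_univ] using sum_sub_sum_div_card univ a
  have hβ : ∑ i, β i = 0 := by simpa only [card_univ] using sum_sub_sum_div_card univ b
  have hsummand : ∀ S ∈ powersetCard (k + 1) univ,
      ((∑ i ∈ S, a i) / (k + 1 : ℕ) - (∑ i, a i) / Fintype.card ι) *
          ((∑ i ∈ Sᶜ, b i) / (l + 1 : ℕ) - (∑ i, b i) / Fintype.card ι) =
        (∑ i ∈ S, α i) * (∑ j ∈ Sᶜ, β j) / ((k + 1 : ℕ) * (l + 1 : ℕ)) := by
    intro S hS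
    have hSa : #S = k + 1 := (mem_powersetCard.1 hS).2
    have hSb : #Sᶜ = l + 1 := by rw [card_compl, hSa]; omega
    rw [← hSa, ← hSb, sum_div_card_sub (card_pos.1 (by omega)),
      sum_div_card_sub (card_pos.1 (by omega))]
    ring
  rw [sum_congr rfl hsummand, ← sum_div, sum_powersetCard_sum_mul_sum_compl, hα, hβ,
    show Fintype.card ι - 2 = k + l by omega]
  ring

theorem two_arm_means_covariance_general (n na nb : ℕ) (h1 : 1 ≤ na) (h2 : na + nb = n)
    (h3 : 1 ≤ nb) (a b : Fin n → ℝ) :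
    (∑ S ∈ Finset.powersetCard na (Finset.univ : Finset (Fin n)),
        ((∑ i ∈ S, a i) / (na : ℝ) - (∑ i, a i) / (n : ℝ))
          * ((∑ i ∈ Sᶜ, b i) / (nb : ℝ) - (∑ i, b i) / (n : ℝ)))
      / ((Finset.powersetCard na (Finset.univ : Finset (Fin n))).card : ℝ)
    = -(1 / ((n : ℝ) - 1))
        * ((∑ i, (a i - (∑ j, a j) / (n : ℝ)) * (b i - (∑ j, b j) / (n : ℝ))) / (n : ℝ)) := by
  obtain ⟨k, rfl⟩ := Nat.exists_eq_add_of_le' h1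
  obtain ⟨l, rfl⟩ := Nat.exists_eq_add_of_le' h3
  have hn : n = k + l + 2 := by omega
  have hsum := sum_powersetCard_sub_mean_mul_sub_mean k l (by rw [Fintype.card_fin, hn]) a b
  rw [Fintype.card_fin] at hsum
  have hchoose :
      ((k + l).choose k : ℝ) * (n * (n - 1)) = n.choose (k + 1) * ((k + 1) * (l + 1)) := by
    have := congrArg (Nat.cast (R := ℝ)) (choose_mul_add_two_mul_add_one k l)
    push_cast at this
    rw [hn]; push_cast
    linear_combination this
  have hn0 : (n : ℝ) ≠ 0 := by rw [hn]; positivity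
  have hn1 : (n : ℝ) - 1 ≠ 0 := by rw [hn]; push_cast; linarith
  have hC : (n.choose (k + 1) : ℝ) ≠ 0 := by exact_mod_cast (Nat.choose_pos (by omega)).ne'
  rw [hsum, card_powersetCard, card_univ, Fintype.card_fin]
  generalize ∑ i, (a i - (∑ j, a j) / n) * (b i - (∑ j, b j) / n) = σ
  field_simp
  push_cast
  linear_combination (-σ) * hchoose

theorem two_arm_means_covariance (n na nb : ℕ) (h1 : 1 ≤ na) (h2 : na + nb = n)
    (h3 : 1 ≤ nb) (hn : 2 ≤ n) (a b : Fin n → ℝ) :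
    (∑ S ∈ Finset.powersetCard na (Finset.univ : Finset (Fin n)),
        ((∑ i ∈ S, a i) / (na : ℝ) - (∑ i, a i) / (n : ℝ))
          * ((∑ i ∈ Sᶜ, b i) / (nb : ℝ) - (∑ i, b i) / (n : ℝ)))
      / ((Finset.powersetCard na (Finset.univ : Finset (Fin n))).card : ℝ)
    = -(1 / ((n : ℝ) - 1))
        * ((∑ i, (a i - (∑ j, a j) / (n : ℝ)) * (b i - (∑ j, b j) / (n : ℝ))) / (n : ℝ)) :=
  two_arm_means_covariance_general n na nb h1 h2 h3 a b
end

section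
/- In the completely randomized two-arm setting, Var(ā_obs − b̄_obs) = ((n−n_a)/(n−1))·σ_a²/n_a + ((n−n_b)/(n−1))·σ_b²/n_b + (2/(n−1))·σ_ab, and this is bounded above by (n/(n−1))·(σ_a²/n_a + σ_b²/n_b). -/
/-!
Centring both arms, the deviation of `ā_obs - b̄_obs` from `ā - b̄` on the treated set `S` is
`∑ i ∈ S, c i` with `c i = (a i - ā) / n_a + (b i - b̄) / n_b`, and `∑ i, c i = 0`. For such `c`,
`(∑ i ∈ S, c i) ^ 2 = -(∑ i ∈ S, c i) * (∑ j ∉ S, c j)`, and every pair `i ≠ j` is split as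
`i ∈ S`, `j ∉ S` by exactly `C(n - 2, k - 1)` of the `k`-subsets `S`; hence the subsets sum to
`C(n - 2, k - 1) * ∑ i, c i ^ 2`, and dividing by `C(n, k)` leaves the factor
`k (n - k) / (n (n - 1))`. Expanding `∑ i, c i ^ 2` gives the formula; the bound is
`2 σ_ab ≤ σ_a² + σ_b²`.
-/

open Finset
open scoped BigOperators

theorem Nat.choose_mul_add_one_mul_add_two (p q : ℕ) :
    (p + q).choose p * ((p + q + 1) * (p + q + 2))
      = (p + q + 2).choose (p + 1) * ((p + 1) * (q + 1)) := by
  have h1 := Nat.choose_mul_succ_eq (p + q) p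
  have h2 := Nat.add_one_mul_choose_eq (p + q + 1) p
  rw [show p + q + 1 - p = q + 1 by omega] at h1
  calc (p + q).choose p * ((p + q + 1) * (p + q + 2))
      = (p + q + 2) * (p + q + 1).choose p * (q + 1) := by rw [← mul_assoc, h1]; ring
    _ = _ := by rw [h2]; ring

namespace Finset
variable {α : Type*}

theorem card_filter_powersetCard_mem_and_notMem [DecidableEq α] {s : Finset α} {i j : α}
    (hi : i ∈ s) (hj : j ∈ s) (hij : i ≠ j) (k : ℕ) :
    #{S ∈ s.powersetCard (k + 1) | i ∈ S ∧ j ∉ S} = (#s - 2).choose k := by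
  have hfilter : {S ∈ s.powersetCard (k + 1) | i ∈ S ∧ j ∉ S}
      = {S ∈ (s.erase j).powersetCard (k + 1) | {i} ⊆ S} := by
    ext S
    simp only [mem_filter, mem_powersetCard, subset_erase, singleton_subset_iff]
    tauto
  rw [hfilter, card_filter_powersetCard_subset _ _ _ (by simpa [hij]) (by simp),
    card_singleton, card_erase_of_mem hj]
  rfl

theorem sum_powersetCard_sum_mul_sum_sdiff [DecidableEq α] {R : Type*} [CommRing R]
    (s : Finset α) (c : α → R) (k : ℕ) :
    ∑ S ∈ s.powersetCard (k + 1), (∑ i ∈ S, c i) * ∑ j ∈ s \ S, c j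
      = (#s - 2).choose k * ((∑ i ∈ s, c i) ^ 2 - ∑ i ∈ s, c i ^ 2) := by
  have expand : ∀ S ∈ s.powersetCard (k + 1), (∑ i ∈ S, c i) * ∑ j ∈ s \ S, c j
      = ∑ i ∈ s, ∑ j ∈ s, if i ∈ S ∧ j ∉ S then c i * c j else 0 := by
    intro S hS
    have hsum : ∑ i ∈ S, c i = ∑ i ∈ s, if i ∈ S then c i else 0 := by
      rw [sum_ite_mem, inter_eq_right.2 (mem_powersetCard.1 hS).1]
    rw [hsum, sdiff_eq_filter, sum_filter, sum_mul_sum]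
    simp only [ite_zero_mul_ite_zero]
  have count : ∀ i ∈ s, ∀ j ∈ s,
      ∑ S ∈ s.powersetCard (k + 1), (if i ∈ S ∧ j ∉ S then c i * c j else 0)
        = ((#s - 2).choose k - if i = j then ((#s - 2).choose k : R) else 0) * (c i * c j) := by
    intro i hi j hj
    rw [← sum_filter, sum_const, nsmul_eq_mul]
    by_cases hij : i = j
    · subst hij; simp
    · rw [card_filter_powersetCard_mem_and_notMem hi hj hij, if_neg hij, sub_zero]
  rw [sum_congr rfl expand, sum_comm, sum_congr rfl fun i _ => sum_comm,
    sum_congr rfl fun i hi => sum_congr rfl fun j hj => count i hi j hj, sq, sum_mul_sum]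
  simp [sub_mul, ite_mul, sum_sub_distrib, sq, mul_sub, mul_sum]

theorem sum_powersetCard_sq_sum_of_sum_eq_zero {R : Type*} [CommRing R] (s : Finset α)
    (c : α → R) (hc : ∑ i ∈ s, c i = 0) (k : ℕ) :
    ∑ S ∈ s.powersetCard (k + 1), (∑ i ∈ S, c i) ^ 2 = (#s - 2).choose k * ∑ i ∈ s, c i ^ 2 := by
  classical
  have hsq : ∀ S ∈ s.powersetCard (k + 1),
      (∑ i ∈ S, c i) ^ 2 = -((∑ i ∈ S, c i) * ∑ j ∈ s \ S, c j) := by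
    intro S hS
    have hsplit := sum_sdiff (mem_powersetCard.1 hS).1 (f := c)
    rw [hc] at hsplit
    linear_combination (∑ i ∈ S, c i) * hsplit
  rw [sum_congr rfl hsq, sum_neg_distrib, sum_powersetCard_sum_mul_sum_sdiff, hc]
  ring

theorem sum_div_add_div_sq {K : Type*} [Field K] (s : Finset α) (x y : α → K) (p q : K) :
    ∑ i ∈ s, (x i / p + y i / q) ^ 2 = (∑ i ∈ s, x i ^ 2) / p ^ 2
      + 2 * (∑ i ∈ s, x i * y i) / (p * q) + (∑ i ∈ s, y i ^ 2) / q ^ 2 := by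
  have hpt : ∀ i, (x i / p + y i / q) ^ 2
      = x i ^ 2 / p ^ 2 + 2 * (x i * y i) / (p * q) + y i ^ 2 / q ^ 2 := fun i => by ring
  simp only [hpt, sum_add_distrib, ← sum_div, ← mul_sum]

theorem sum_sub_sum_div_card_eq_zero {K : Type*} [Field K] [CharZero K] (s : Finset α)
    (f : α → K) : ∑ i ∈ s, (f i - (∑ j ∈ s, f j) / #s) = 0 := by
  rcases s.eq_empty_or_nonempty with rfl | hs
  · simp
  · rw [sum_sub_distrib, sum_const, nsmul_eq_mul, mul_div_cancel₀ _ (by simp [hs.ne_empty]),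
      sub_self]

theorem expect_powersetCard_sq_sum_of_sum_eq_zero {K : Type*} [Field K] [CharZero K]
    (s : Finset α) (c : α → K) (hc : ∑ i ∈ s, c i = 0) {k l : ℕ} (hk : k ≠ 0) (hl : l ≠ 0)
    (hs : #s = k + l) :
    𝔼 S ∈ s.powersetCard k, (∑ i ∈ S, c i) ^ 2 = k * l / (#s * (#s - 1)) * ∑ i ∈ s, c i ^ 2 := by
  obtain ⟨p, rfl⟩ := Nat.exists_eq_add_one_of_ne_zero hk
  obtain ⟨q, rfl⟩ := Nat.exists_eq_add_one_of_ne_zero hl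
  have hchoose : ((p + q).choose p * ((p + q + 1) * (p + q + 2)) : K)
      = (p + q + 2).choose (p + 1) * ((p + 1) * (q + 1)) := by
    exact_mod_cast Nat.choose_mul_add_one_mul_add_two p q
  have hpos : ((p + q + 2).choose (p + 1) : K) ≠ 0 := by
    exact_mod_cast (Nat.choose_pos (by omega)).ne'
  rw [expect_eq_sum_div_card, sum_powersetCard_sq_sum_of_sum_eq_zero _ _ hc, card_powersetCard, hs,
    show p + 1 + (q + 1) - 2 = p + q by omega, show p + 1 + (q + 1) = p + q + 2 by ring]
  push_cast
  have hd : ((p : K) + q + 2) * (p + q + 1) ≠ 0 := by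
    exact_mod_cast (by positivity : (p + q + 2) * (p + q + 1) ≠ 0)
  rw [show (p : K) + q + 2 - 1 = p + q + 1 by ring, div_mul_eq_mul_div, div_eq_div_iff hpos hd]
  linear_combination (∑ i ∈ s, c i ^ 2) * hchoose

end Finset

theorem two_arm_deviation_eq_sum {ι K : Type*} [Fintype ι] [DecidableEq ι] [Field K]
    [CharZero K] (a b : ι → K) {S : Finset ι} {n na nb : ℕ} (hS : #S = na) (hna : na ≠ 0)
    (hnb : nb ≠ 0) (h : na + nb = n) :
    ((∑ i ∈ S, a i) / na - (∑ i ∈ Sᶜ, b i) / nb) - ((∑ i, a i) / n - (∑ i, b i) / n)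
      = ∑ i ∈ S, ((a i - (∑ j, a j) / n) / na + (b i - (∑ j, b j) / n) / nb) := by
  subst h
  have hSc : ∑ i ∈ Sᶜ, b i = ∑ i, b i - ∑ i ∈ S, b i := by
    rw [← sum_compl_add_sum S b, add_sub_cancel_right]
  simp only [sum_add_distrib, ← sum_div, sum_sub_distrib, sum_const, hS, nsmul_eq_mul, hSc]
  have hna' : (na : K) ≠ 0 := by exact_mod_cast hna
  have hnb' : (nb : K) ≠ 0 := by exact_mod_cast hnb
  have hn : (na : K) + nb ≠ 0 := by exact_mod_cast (by omega : na + nb ≠ 0)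
  push_cast
  field_simp
  ring

theorem two_arm_mean_sq_deviation_eq {ι K : Type*} [Fintype ι] [DecidableEq ι] [Field K]
    [CharZero K] (a b : ι → K) {n na nb : ℕ} (hι : Fintype.card ι = n) (h : na + nb = n)
    (hna : na ≠ 0) (hnb : nb ≠ 0) :
    (∑ S ∈ powersetCard na univ,
        (((∑ i ∈ S, a i) / na - (∑ i ∈ Sᶜ, b i) / nb) - ((∑ i, a i) / n - (∑ i, b i) / n)) ^ 2)
      / #(powersetCard na (univ : Finset ι))
    = na * nb / (n * (n - 1))
        * ∑ i, ((a i - (∑ j, a j) / n) / na + (b i - (∑ j, b j) / n) / nb) ^ 2 := by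
  have hcentred (f : ι → K) : ∑ i, (f i - (∑ j, f j) / n) = 0 := by
    simpa [hι] using sum_sub_sum_div_card_eq_zero univ f
  rw [← expect_eq_sum_div_card, expect_congr rfl fun S hS => by
      rw [two_arm_deviation_eq_sum a b (mem_powersetCard_univ.1 hS) hna hnb h],
    expect_powersetCard_sq_sum_of_sum_eq_zero (l := nb) _ _ ?_ hna hnb (by simp [hι, h]),
    card_univ, hι]
  simp [sum_add_distrib, ← sum_div, hcentred]

theorem two_arm_diff_variance_general (n na nb : ℕ) (h1 : 1 ≤ na) (h3 : 1 ≤ nb)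
    (h2 : na + nb = n) (a b : Fin n → ℝ) :
    (∑ S ∈ Finset.powersetCard na (Finset.univ : Finset (Fin n)),
        (((∑ i ∈ S, a i) / (na : ℝ) - (∑ i ∈ Sᶜ, b i) / (nb : ℝ))
          - ((∑ i, a i) / (n : ℝ) - (∑ i, b i) / (n : ℝ))) ^ 2)
      / ((Finset.powersetCard na (Finset.univ : Finset (Fin n))).card : ℝ)
    = (((n : ℝ) - na) / ((n : ℝ) - 1))
        * (((∑ i, (a i - (∑ j, a j) / (n : ℝ)) ^ 2) / (n : ℝ)) / (na : ℝ))
      + (((n : ℝ) - nb) / ((n : ℝ) - 1))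
        * (((∑ i, (b i - (∑ j, b j) / (n : ℝ)) ^ 2) / (n : ℝ)) / (nb : ℝ))
      + (2 / ((n : ℝ) - 1))
        * ((∑ i, (a i - (∑ j, a j) / (n : ℝ)) * (b i - (∑ j, b j) / (n : ℝ))) / (n : ℝ))
    ∧ (((n : ℝ) - na) / ((n : ℝ) - 1))
        * (((∑ i, (a i - (∑ j, a j) / (n : ℝ)) ^ 2) / (n : ℝ)) / (na : ℝ))
      + (((n : ℝ) - nb) / ((n : ℝ) - 1))
        * (((∑ i, (b i - (∑ j, b j) / (n : ℝ)) ^ 2) / (n : ℝ)) / (nb : ℝ))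
      + (2 / ((n : ℝ) - 1))
        * ((∑ i, (a i - (∑ j, a j) / (n : ℝ)) * (b i - (∑ j, b j) / (n : ℝ))) / (n : ℝ))
      ≤ ((n : ℝ) / ((n : ℝ) - 1))
        * (((∑ i, (a i - (∑ j, a j) / (n : ℝ)) ^ 2) / (n : ℝ)) / (na : ℝ)
          + ((∑ i, (b i - (∑ j, b j) / (n : ℝ)) ^ 2) / (n : ℝ)) / (nb : ℝ)) := by
  rw [two_arm_mean_sq_deviation_eq a b (Fintype.card_fin n) h2 (by omega) (by omega),
    sum_div_add_div_sq]
  set abar := (∑ j, a j) / (n : ℝ)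
  set bbar := (∑ j, b j) / (n : ℝ)
  set Sa := ∑ i, (a i - abar) ^ 2
  set Sb := ∑ i, (b i - bbar) ^ 2
  set Sab := ∑ i, (a i - abar) * (b i - bbar)
  have hcov : 2 * Sab ≤ Sa + Sb := by
    have hpt := sum_le_sum fun i (_ : i ∈ univ) => two_mul_le_add_sq (a i - abar) (b i - bbar)
    simpa [Sa, Sb, Sab, mul_sum, sum_add_distrib, mul_assoc] using hpt
  have hna : (1 : ℝ) ≤ na := by exact_mod_cast h1
  have hnb : (1 : ℝ) ≤ nb := by exact_mod_cast h3
  have hn1 : (0 : ℝ) < na + nb - 1 := by linarith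
  rw [show (n : ℝ) = na + nb by exact_mod_cast h2.symm]
  refine ⟨by field_simp; ring, sub_nonneg.1 ?_⟩
  have hgap : (na + nb : ℝ) / (na + nb - 1) * (Sa / (na + nb) / na + Sb / (na + nb) / nb)
      - ((na + nb - na) / (na + nb - 1) * (Sa / (na + nb) / na)
        + (na + nb - nb) / (na + nb - 1) * (Sb / (na + nb) / nb)
        + 2 / (na + nb - 1) * (Sab / (na + nb)))
      = (Sa + Sb - 2 * Sab) / ((na + nb) * (na + nb - 1)) := by
    field_simp
    ring
  rw [hgap]
  exact div_nonneg (by linarith) (by positivity)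

theorem two_arm_diff_variance (n na nb : ℕ) (h1 : 1 ≤ na) (h3 : 1 ≤ nb)
    (h2 : na + nb = n) (hn : 2 ≤ n) (a b : Fin n → ℝ) :
    (∑ S ∈ Finset.powersetCard na (Finset.univ : Finset (Fin n)),
        (((∑ i ∈ S, a i) / (na : ℝ) - (∑ i ∈ Sᶜ, b i) / (nb : ℝ))
          - ((∑ i, a i) / (n : ℝ) - (∑ i, b i) / (n : ℝ))) ^ 2)
      / ((Finset.powersetCard na (Finset.univ : Finset (Fin n))).card : ℝ)
    = (((n : ℝ) - na) / ((n : ℝ) - 1))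
        * (((∑ i, (a i - (∑ j, a j) / (n : ℝ)) ^ 2) / (n : ℝ)) / (na : ℝ))
      + (((n : ℝ) - nb) / ((n : ℝ) - 1))
        * (((∑ i, (b i - (∑ j, b j) / (n : ℝ)) ^ 2) / (n : ℝ)) / (nb : ℝ))
      + (2 / ((n : ℝ) - 1))
        * ((∑ i, (a i - (∑ j, a j) / (n : ℝ)) * (b i - (∑ j, b j) / (n : ℝ))) / (n : ℝ))
    ∧ (((n : ℝ) - na) / ((n : ℝ) - 1))
        * (((∑ i, (a i - (∑ j, a j) / (n : ℝ)) ^ 2) / (n : ℝ)) / (na : ℝ))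
      + (((n : ℝ) - nb) / ((n : ℝ) - 1))
        * (((∑ i, (b i - (∑ j, b j) / (n : ℝ)) ^ 2) / (n : ℝ)) / (nb : ℝ))
      + (2 / ((n : ℝ) - 1))
        * ((∑ i, (a i - (∑ j, a j) / (n : ℝ)) * (b i - (∑ j, b j) / (n : ℝ))) / (n : ℝ))
      ≤ ((n : ℝ) / ((n : ℝ) - 1))
        * (((∑ i, (a i - (∑ j, a j) / (n : ℝ)) ^ 2) / (n : ℝ)) / (na : ℝ)
          + ((∑ i, (b i - (∑ j, b j) / (n : ℝ)) ^ 2) / (n : ℝ)) / (nb : ℝ)) :=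
  two_arm_diff_variance_general n na nb h1 h3 h2 a b
end

section
/- In the completely randomized two-arm setting, the mean squared cross-arm difference satisfies E[(1/(n_a n_b)) ∑_{i∈A} ∑_{j∈B} (a_i − b_j)²] = σ_a² + σ_b² + (2/(n−1))σ_ab + (ā − b̄)². -/
/-!
Each ordered pair `(i, j)` of distinct units has `i ∈ A` and `j ∈ B` in exactly
`C(n - 2, n_a - 1)` of the `C(n, n_a)` assignments, and
`n_a n_b C(n, n_a) = n (n - 1) C(n - 2, n_a - 1)`. Hence the expected cross-arm mean is the
plain average of `(a_i - b_j)²` over the `n (n - 1)` ordered pairs of distinct units. Expanding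
the square in raw moments, it is the diagonal `i = j`, missing from that average, that produces
the covariance term `2 σ_ab / (n - 1)`.
-/

open Finset

variable {ι : Type*}

theorem Nat.add_one_mul_add_one_mul_choose (k l : ℕ) :
    (k + 1) * (l + 1) * (k + l + 2).choose (k + 1)
      = (k + l + 2) * (k + l + 1) * (k + l).choose k := by
  have h₁ : (k + l + 2) * (k + l + 1).choose k = (k + l + 2).choose (k + 1) * (k + 1) :=
    Nat.add_one_mul_choose_eq _ _
  have h₂ : (k + l).choose k * (k + l + 1) = (k + l + 1).choose k * (l + 1) := by
    rw [Nat.choose_mul_succ_eq, show k + l + 1 - k = l + 1 by omega]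
  calc (k + 1) * (l + 1) * (k + l + 2).choose (k + 1)
      = (l + 1) * ((k + l + 2) * (k + l + 1).choose k) := by rw [h₁]; ring
    _ = (k + l + 2) * ((k + l).choose k * (k + l + 1)) := by rw [h₂]; ring
    _ = _ := by ring

theorem Finset.card_filter_powersetCard_mem_notMem [DecidableEq ι] (s : Finset ι) {k : ℕ}
    (hk : 1 ≤ k) {i j : ι} (hi : i ∈ s) (hj : j ∈ s) (hij : i ≠ j) :
    #{t ∈ s.powersetCard k | i ∈ t ∧ j ∉ t} = (#s - 2).choose (k - 1) := by
  have hfilter : {t ∈ s.powersetCard k | i ∈ t ∧ j ∉ t}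
      = {t ∈ (s.erase j).powersetCard k | {i} ⊆ t} := by
    ext t
    simp only [mem_filter, mem_powersetCard, subset_erase, singleton_subset_iff]
    tauto
  rw [hfilter, card_filter_powersetCard_subset _ _ _ (by simpa [hij]) (by simpa),
    card_erase_of_mem hj, card_singleton, Nat.sub_sub]

theorem Finset.sum_powersetCard_sum_sum_compl [Fintype ι] [DecidableEq ι] {M : Type*}
    [AddCommMonoid M] {k : ℕ} (hk : 1 ≤ k) (f : ι → ι → M) :
    ∑ t ∈ powersetCard k univ, ∑ i ∈ t, ∑ j ∈ tᶜ, f i j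
      = (Fintype.card ι - 2).choose (k - 1) • ∑ p ∈ univ.offDiag, f p.1 p.2 := by
  calc ∑ t ∈ powersetCard k univ, ∑ i ∈ t, ∑ j ∈ tᶜ, f i j
      = ∑ t ∈ powersetCard k univ, ∑ p ∈ t ×ˢ tᶜ, f p.1 p.2 := by
        simp only [sum_product]
    _ = ∑ p ∈ univ.offDiag, ∑ t ∈ powersetCard k univ with p.1 ∈ t ∧ p.2 ∉ t, f p.1 p.2 := by
        refine sum_comm' fun t p ↦ ?_
        simp only [mem_product, mem_compl, mem_filter, mem_offDiag, mem_univ, true_and]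
        constructor
        · rintro ⟨ht, hp₁, hp₂⟩
          exact ⟨⟨ht, hp₁, hp₂⟩, fun h ↦ hp₂ (h ▸ hp₁)⟩
        · rintro ⟨ht, -⟩
          exact ht
    _ = _ := by
        rw [smul_sum]
        refine sum_congr rfl fun p hp ↦ ?_
        obtain ⟨-, -, hp⟩ := mem_offDiag.1 hp
        rw [sum_const, card_filter_powersetCard_mem_notMem _ hk (mem_univ _) (mem_univ _) hp,
          card_univ]

theorem Finset.sum_offDiag_eq_sum_sum_sub [DecidableEq ι] {M : Type*} [AddCommGroup M]
    (s : Finset ι) (f : ι → ι → M) :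
    ∑ p ∈ s.offDiag, f p.1 p.2 = ∑ i ∈ s, ∑ j ∈ s, f i j - ∑ i ∈ s, f i i := by
  rw [eq_sub_iff_add_eq, ← sum_diag s (fun p ↦ f p.1 p.2), add_comm,
    ← sum_union (disjoint_diag_offDiag s), diag_union_offDiag, sum_product]

theorem expectation_cross_arm_mean_eq_offDiag_mean [Fintype ι] [DecidableEq ι] {k l : ℕ}
    (hk : 1 ≤ k) (hl : 1 ≤ l) (hcard : Fintype.card ι = k + l) (f : ι → ι → ℝ) :
    (∑ t ∈ powersetCard k (univ : Finset ι),
          1 / ((k : ℝ) * l) * ∑ i ∈ t, ∑ j ∈ tᶜ, f i j) / #(powersetCard k (univ : Finset ι))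
      = (∑ p ∈ univ.offDiag, f p.1 p.2) / (Fintype.card ι * (Fintype.card ι - 1)) := by
  obtain ⟨k, rfl⟩ := Nat.exists_eq_add_of_le' hk
  obtain ⟨l, rfl⟩ := Nat.exists_eq_add_of_le' hl
  have key : ((k + 1) * (l + 1) * (k + l + 2).choose (k + 1) : ℝ)
      = (k + l + 2) * (k + l + 1) * (k + l).choose k := by
    exact_mod_cast Nat.add_one_mul_add_one_mul_choose k l
  rw [← mul_sum, sum_powersetCard_sum_sum_compl hk, card_powersetCard, card_univ, hcard,
    show k + 1 + (l + 1) - 2 = k + l by omega, show k + 1 + (l + 1) = k + l + 2 by omega,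
    Nat.add_sub_cancel, nsmul_eq_mul]
  have hchoose : ((k + l + 2).choose (k + 1) : ℝ) ≠ 0 :=
    Nat.cast_ne_zero.2 (Nat.choose_pos (by omega)).ne'
  push_cast
  rw [show (k + l + 2 - 1 : ℝ) = k + l + 1 by ring]
  field_simp
  linear_combination -(∑ p ∈ univ.offDiag, f p.1 p.2) * key

/-- `popMean a = ā` and `popCov a b = σ_ab`, with divisor `n`; `σ_a² = popCov a a`. -/
noncomputable def popMean [Fintype ι] (a : ι → ℝ) : ℝ :=
  (∑ i, a i) / Fintype.card ι

noncomputable def popCov [Fintype ι] (a b : ι → ℝ) : ℝ :=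
  (∑ i, (a i - popMean a) * (b i - popMean b)) / Fintype.card ι

theorem sum_eq_card_mul_popMean [Fintype ι] (a : ι → ℝ) :
    ∑ i, a i = Fintype.card ι * popMean a := by
  rcases isEmpty_or_nonempty ι with hι | hι
  · simp
  · rw [popMean, mul_div_cancel₀ _ (by positivity)]

theorem popCov_eq [Fintype ι] (a b : ι → ℝ) :
    popCov a b = (∑ i, a i * b i) / Fintype.card ι - popMean a * popMean b := by
  rcases isEmpty_or_nonempty ι with hι | hι
  · simp [popCov, popMean]
  have hn : (Fintype.card ι : ℝ) ≠ 0 := by positivity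
  have ha := sum_eq_card_mul_popMean a
  have hb := sum_eq_card_mul_popMean b
  simp only [popCov, sub_mul, mul_sub, sum_sub_distrib, ← sum_mul, ← mul_sum, sum_const,
    card_univ, nsmul_eq_mul, ha, hb]
  field_simp
  ring

theorem sum_offDiag_sq_sub_div_eq_popCov [Fintype ι] [DecidableEq ι] (h : 2 ≤ Fintype.card ι)
    (a b : ι → ℝ) :
    (∑ p ∈ univ.offDiag, (a p.1 - b p.2) ^ 2) / (Fintype.card ι * (Fintype.card ι - 1))
      = popCov a a + popCov b b + 2 / (Fintype.card ι - 1) * popCov a b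
        + (popMean a - popMean b) ^ 2 := by
  have hn : (2 : ℝ) ≤ Fintype.card ι := by exact_mod_cast h
  have hn₀ : (Fintype.card ι : ℝ) ≠ 0 := by positivity
  have hn₁ : (Fintype.card ι : ℝ) - 1 ≠ 0 := by linarith
  have ha := sum_eq_card_mul_popMean a
  have hb := sum_eq_card_mul_popMean b
  rw [sum_offDiag_eq_sum_sum_sub univ fun i j ↦ (a i - b j) ^ 2, popCov_eq, popCov_eq, popCov_eq]
  simp only [sub_sq, sum_add_distrib, sum_sub_distrib, ← sum_mul, ← mul_sum, sum_const,
    card_univ, nsmul_eq_mul, mul_assoc, ha, hb]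
  field_simp
  ring

theorem cross_arm_squared_diff_expectation (n na nb : ℕ)
    (h1 : 1 ≤ na) (h3 : 1 ≤ nb) (h2 : na + nb = n) (a b : Fin n → ℝ) :
    (∑ S ∈ Finset.powersetCard na (Finset.univ : Finset (Fin n)),
        (1 / ((na : ℝ) * (nb : ℝ))) * ∑ i ∈ S, ∑ j ∈ Sᶜ, (a i - b j) ^ 2)
      / ((Finset.powersetCard na (Finset.univ : Finset (Fin n))).card : ℝ)
    = (∑ i, (a i - (∑ j, a j) / (n : ℝ)) ^ 2) / (n : ℝ)
      + (∑ i, (b i - (∑ j, b j) / (n : ℝ)) ^ 2) / (n : ℝ)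
      + (2 / ((n : ℝ) - 1))
        * ((∑ i, (a i - (∑ j, a j) / (n : ℝ)) * (b i - (∑ j, b j) / (n : ℝ))) / (n : ℝ))
      + ((∑ i, a i) / (n : ℝ) - (∑ i, b i) / (n : ℝ)) ^ 2 := by
  have hcard : Fintype.card (Fin n) = na + nb := by rw [Fintype.card_fin, h2]
  rw [expectation_cross_arm_mean_eq_offDiag_mean h1 h3 hcard,
    sum_offDiag_sq_sub_div_eq_popCov (by omega)]
  simp only [popCov, popMean, Fintype.card_fin, sq]
end

section
/- In the completely randomized two-arm setting, the estimator V̂ = (1/(n_a n_b)) ∑_{i∈A} ∑_{j∈B} (a_i − b_j)² − ((n_a−1)/n_a) s_a² − ((n_b−1)/n_b) s_b² satisfies E[V̂] = Var(ā_obs − b̄_obs) + (ā − b̄)², so it is conservative with nonnegative bias (ā − b̄)². -/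
open Finset

/-!
Averaging `(a i - b j) ^ 2` over `S × T` gives the two within-arm variances plus the squared
difference of the arm means, so for every assignment the estimator equals `X ^ 2`, where `X` is the
difference-in-means estimator. Under complete randomization each arm mean is unbiased for the
corresponding population mean, so `E X = ā - b̄`, and `E[X ^ 2] = Var X + (E X) ^ 2`.
-/

open scoped BigOperators

namespace Finset

variable {α : Type*} [DecidableEq α]

theorem card_filter_mem_powersetCard {s : Finset α} {i : α} (hi : i ∈ s) (k : ℕ) :
    #{S ∈ powersetCard (k + 1) s | i ∈ S} = (#s - 1).choose k := by
  rw [← card_erase_of_mem hi, ← card_powersetCard]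
  refine card_nbij' (·.erase i) (insert i) ?_ ?_ ?_ ?_
  · intro S hS
    simp only [mem_coe, mem_filter, mem_powersetCard] at hS
    simp only [mem_coe, mem_powersetCard]
    exact ⟨erase_subset_erase _ hS.1.1, by rw [card_erase_of_mem hS.2, hS.1.2, Nat.add_sub_cancel]⟩
  · intro T hT
    simp only [mem_coe, mem_powersetCard] at hT
    have hiT : i ∉ T := fun h => (mem_erase.1 (hT.1 h)).1 rfl
    simp only [mem_coe, mem_filter, mem_powersetCard, mem_insert_self, and_true]
    exact ⟨insert_subset hi (hT.1.trans (erase_subset _ _)), by rw [card_insert_of_notMem hiT, hT.2]⟩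
  · intro S hS
    exact insert_erase (mem_filter.1 hS).2
  · intro T hT
    exact erase_insert fun h => (mem_erase.1 ((mem_powersetCard.1 hT).1 h)).1 rfl

theorem sum_powersetCard_sum {M : Type*} [AddCommMonoid M] (s : Finset α) (k : ℕ) (f : α → M) :
    ∑ S ∈ powersetCard (k + 1) s, ∑ i ∈ S, f i = (#s - 1).choose k • ∑ i ∈ s, f i := by
  rw [sum_comm' (t' := s) (s' := fun i => {S ∈ powersetCard (k + 1) s | i ∈ S})]
  · rw [smul_sum]
    refine sum_congr rfl fun i hi => ?_
    rw [sum_const, card_filter_mem_powersetCard hi]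
  · intro S i
    simp only [mem_filter, mem_powersetCard]
    exact ⟨fun h => ⟨⟨h.1, h.2⟩, h.1.1 h.2⟩, fun h => ⟨h.1.1, h.1.2⟩⟩

end Finset

theorem sum_sum_sub_sq {ι κ R : Type*} [CommRing R] (S : Finset ι) (T : Finset κ) (a : ι → R)
    (b : κ → R) :
    ∑ i ∈ S, ∑ j ∈ T, (a i - b j) ^ 2
      = #T * ∑ i ∈ S, a i ^ 2 + #S * ∑ j ∈ T, b j ^ 2 - 2 * (∑ i ∈ S, a i) * ∑ j ∈ T, b j := by
  simp only [sub_sq, sum_add_distrib, sum_sub_distrib, sum_const, nsmul_eq_mul, ← sum_mul,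
    ← mul_sum]
  ring

section Mean

variable {ι κ K : Type*} [Field K] [CharZero K]

theorem sum_sub_sum_div_card_sq (s : Finset ι) (f : ι → K) :
    ∑ i ∈ s, (f i - (∑ j ∈ s, f j) / #s) ^ 2 = ∑ i ∈ s, f i ^ 2 - (∑ i ∈ s, f i) ^ 2 / #s := by
  rcases s.eq_empty_or_nonempty with rfl | hs
  · simp
  have hs : (#s : K) ≠ 0 := Nat.cast_ne_zero.2 hs.card_pos.ne'
  simp only [sub_sq, sum_add_distrib, sum_sub_distrib, sum_const, nsmul_eq_mul, ← sum_mul,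
    ← mul_sum]
  field_simp
  ring

theorem sum_sq_div_card_eq_variance_add_sq_mean (s : Finset ι) (f : ι → K) :
    (∑ i ∈ s, f i ^ 2) / #s
      = (∑ i ∈ s, (f i - (∑ j ∈ s, f j) / #s) ^ 2) / #s + ((∑ i ∈ s, f i) / #s) ^ 2 := by
  rw [sum_sub_sum_div_card_sq]
  rcases s.eq_empty_or_nonempty with rfl | hs
  · simp
  have hs : (#s : K) ≠ 0 := Nat.cast_ne_zero.2 hs.card_pos.ne'
  field_simp
  ring

theorem mean_cross_sq_sub_variances {S : Finset ι} {T : Finset κ} (hS : S.Nonempty)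
    (hT : T.Nonempty) (a : ι → K) (b : κ → K) :
    1 / ((#S : K) * #T) * ∑ i ∈ S, ∑ j ∈ T, (a i - b j) ^ 2
        - (∑ i ∈ S, (a i - (∑ j ∈ S, a j) / #S) ^ 2) / #S
        - (∑ j ∈ T, (b j - (∑ i ∈ T, b i) / #T) ^ 2) / #T
      = ((∑ i ∈ S, a i) / #S - (∑ j ∈ T, b j) / #T) ^ 2 := by
  have hS : (#S : K) ≠ 0 := Nat.cast_ne_zero.2 hS.card_pos.ne'
  have hT : (#T : K) ≠ 0 := Nat.cast_ne_zero.2 hT.card_pos.ne'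
  rw [sum_sum_sub_sq, sum_sub_sum_div_card_sq, sum_sub_sum_div_card_sq]
  field_simp
  ring

theorem expect_powersetCard_expect [DecidableEq ι] {s : Finset ι} {k : ℕ} (hk : 0 < k)
    (hks : k ≤ #s) (f : ι → K) : 𝔼 S ∈ powersetCard k s, 𝔼 i ∈ S, f i = 𝔼 i ∈ s, f i := by
  obtain ⟨m, rfl⟩ := Nat.exists_eq_add_one_of_ne_zero hk.ne'
  obtain ⟨N, hN⟩ := Nat.exists_eq_add_one_of_ne_zero (hk.trans_le hks).ne'
  have hcount : ((N + 1 : ℕ) : K) * N.choose m = (N + 1).choose (m + 1) * (m + 1 : ℕ) := by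
    exact_mod_cast Nat.add_one_mul_choose_eq N m
  have hchoose : ((N + 1).choose (m + 1) : K) ≠ 0 :=
    Nat.cast_ne_zero.2 (Nat.choose_pos (hN ▸ hks)).ne'
  rw [expect_congr rfl fun S hS => by rw [expect_eq_sum_div_card, (mem_powersetCard.1 hS).2],
    expect_eq_sum_div_card, ← sum_div, sum_powersetCard_sum, card_powersetCard,
    expect_eq_sum_div_card, hN, nsmul_eq_mul, Nat.add_sub_cancel]
  field_simp
  linear_combination (∑ i ∈ s, f i) * hcount

theorem expect_powersetCard_univ_expect_compl [Fintype ι] [DecidableEq ι] {k l : ℕ} (hl : 0 < l)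
    (hkl : k + l = Fintype.card ι) (f : ι → K) :
    𝔼 S ∈ powersetCard k univ, 𝔼 i ∈ Sᶜ, f i = 𝔼 i, f i := by
  have hlu : l ≤ #(univ : Finset ι) := by rw [card_univ]; omega
  rw [← expect_powersetCard_expect hl hlu f]
  refine expect_nbij' compl compl (fun S hS => ?_) (fun S hS => ?_) (fun S _ => compl_compl S)
    (fun S _ => compl_compl S) fun S _ => rfl
  all_goals rw [mem_powersetCard_univ, card_compl, mem_powersetCard_univ.1 hS]; omega

end Mean

theorem cross_arm_variance_estimator_conservative (n na nb : ℕ)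
    (h1 : 1 ≤ na) (h3 : 1 ≤ nb) (h2 : na + nb = n) (a b : Fin n → ℝ) :
    (∑ S ∈ Finset.powersetCard na (Finset.univ : Finset (Fin n)),
        ((1 / ((na : ℝ) * (nb : ℝ))) * ∑ i ∈ S, ∑ j ∈ Sᶜ, (a i - b j) ^ 2
          - (∑ i ∈ S, (a i - (∑ j ∈ S, a j) / (na : ℝ)) ^ 2) / (na : ℝ)
          - (∑ i ∈ Sᶜ, (b i - (∑ j ∈ Sᶜ, b j) / (nb : ℝ)) ^ 2) / (nb : ℝ)))
      / ((Finset.powersetCard na (Finset.univ : Finset (Fin n))).card : ℝ)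
    = (∑ S ∈ Finset.powersetCard na (Finset.univ : Finset (Fin n)),
        (((∑ i ∈ S, a i) / (na : ℝ) - (∑ i ∈ Sᶜ, b i) / (nb : ℝ))
          - ((∑ i, a i) / (n : ℝ) - (∑ i, b i) / (n : ℝ))) ^ 2)
      / ((Finset.powersetCard na (Finset.univ : Finset (Fin n))).card : ℝ)
      + ((∑ i, a i) / (n : ℝ) - (∑ i, b i) / (n : ℝ)) ^ 2
    ∧ 0 ≤ ((∑ i, a i) / (n : ℝ) - (∑ i, b i) / (n : ℝ)) ^ 2 := by
  refine ⟨?_, sq_nonneg _⟩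
  set P := powersetCard na (univ : Finset (Fin n))
  have hcard : ∀ S ∈ P, #S = na ∧ #Sᶜ = nb := fun S hS => by
    rw [card_compl, Fintype.card_fin, mem_powersetCard_univ.1 hS]; omega
  have hpoint : ∀ S ∈ P, 1 / ((na : ℝ) * nb) * ∑ i ∈ S, ∑ j ∈ Sᶜ, (a i - b j) ^ 2
        - (∑ i ∈ S, (a i - (∑ j ∈ S, a j) / na) ^ 2) / na
        - (∑ i ∈ Sᶜ, (b i - (∑ j ∈ Sᶜ, b j) / nb) ^ 2) / nb
      = ((∑ i ∈ S, a i) / na - (∑ i ∈ Sᶜ, b i) / nb) ^ 2 := fun S hS => by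
    obtain ⟨hS, hSc⟩ := hcard S hS
    rw [← hS, ← hSc]
    exact mean_cross_sq_sub_variances (card_pos.1 (by omega)) (card_pos.1 (by omega)) a b
  have hmean : (∑ S ∈ P, ((∑ i ∈ S, a i) / na - (∑ i ∈ Sᶜ, b i) / nb)) / #P
      = (∑ i, a i) / n - (∑ i, b i) / n := by
    rw [← expect_eq_sum_div_card, expect_congr rfl fun S hS => by
      rw [← (hcard S hS).1, ← (hcard S hS).2, ← expect_eq_sum_div_card, ← expect_eq_sum_div_card],
      expect_sub_distrib, expect_powersetCard_expect h1 (by simp [← h2]),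
      expect_powersetCard_univ_expect_compl h3 (by simpa using h2), Fintype.expect_eq_sum_div_card,
      Fintype.expect_eq_sum_div_card, Fintype.card_fin]
  rw [sum_congr rfl hpoint, ← hmean]
  exact sum_sq_div_card_eq_variance_add_sq_mean P _
end

section
/- For a simple random sample of size m without replacement from a finite population x_1,...,x_N (2 ≤ m, N > 3), the variance of the sample central second moment M_2 = (1/m)∑_{i∈S}(X_i − X̄_m)² is Var(M_2) = ((m−1)N(N−m))/(m³(N−1)²(N−2)(N−3)) · [(mN − N − m − 1)(N−1)m_4 − (mN² − 3N² + 6N − 3m − 3)m_2²], where m_r are the population central moments. -/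
open Finset

/-!
Centre the population, `y = x - x̄`, so that `∑ y = 0`. Then `m² M₂(S) = m ∑_S y² - (∑_S y)²`, and
the variance of `M₂` is determined by the sums over all samples of `∑_S y²`, `(∑_S y)²`,
`(∑_S y²)²`, `(∑_S y²)(∑_S y)²` and `(∑_S y)⁴`. Expanding a product of sample sums over tuples of
indices, a tuple whose entries form a `k`-set is counted by the `w k = C(N, m) (m)ₖ / (N)ₖ`
samples containing that set. Summing out one index at a time, the indices outside the set `T`
chosen so far contribute `∑_{l ∉ T} y_l ^ r = p_r - ∑_T y ^ r` with `p_r = ∑ y ^ r`, and `p₁ = 0`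
leaves combinations of `p₂²`, `p₄` and `w 1, …, w 4`.
-/

theorem sum_sub_average_sq_div_card {ι K : Type*} [Field K] [CharZero K] (s : Finset ι)
    (f : ι → K) (c : K) :
    (∑ i ∈ s, (f i - (∑ j ∈ s, f j) / #s) ^ 2) / #s
      = (#s * ∑ i ∈ s, (f i - c) ^ 2 - (∑ i ∈ s, (f i - c)) ^ 2) / #s ^ 2 := by
  rcases s.eq_empty_or_nonempty with rfl | hs
  · simp
  have hs0 : (#s : K) ≠ 0 := by exact_mod_cast hs.card_pos.ne'
  simp only [sub_sq, sum_add_distrib, sum_sub_distrib, ← sum_mul, ← mul_sum, sum_const,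
    nsmul_eq_mul, div_pow]
  field_simp
  ring

theorem Nat.cast_descFactorial_eq_prod_range {R : Type*} [CommRing R] (n k : ℕ) :
    (n.descFactorial k : R) = ∏ i ∈ range k, ((n : R) - i) := by
  induction k with
  | zero => simp
  | succ k ih =>
    rw [← descPochhammer_eval_eq_descFactorial] at ih ⊢
    rw [descPochhammer_succ_eval, ih, prod_range_succ]

theorem Nat.choose_sub_mul_descFactorial {n m k : ℕ} (hkm : k ≤ m) :
    (n - k).choose (m - k) * n.descFactorial k = n.choose m * m.descFactorial k := by
  rw [descFactorial_eq_factorial_mul_choose, descFactorial_eq_factorial_mul_choose,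
    Nat.mul_left_comm, Nat.mul_left_comm (n.choose m), choose_mul hkm, Nat.mul_comm (n.choose k)]

section Sampling

variable {α R : Type*} [Fintype α] [DecidableEq α] [CommRing R]

theorem card_filter_subset_powersetCard_mul_descFactorial (m : ℕ) (T : Finset α) :
    #{S ∈ powersetCard m (univ : Finset α) | T ⊆ S} * (Fintype.card α).descFactorial #T
      = (Fintype.card α).choose m * m.descFactorial #T := by
  by_cases hTm : #T ≤ m
  · rw [card_filter_powersetCard_subset T (univ : Finset α) m (subset_univ T) hTm, card_univ,
      Nat.choose_sub_mul_descFactorial hTm]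
  · have hempty : {S ∈ powersetCard m (univ : Finset α) | T ⊆ S} = ∅ := by
      refine filter_eq_empty_iff.2 fun S hS hTS => hTm ?_
      exact (mem_powersetCard.1 hS).2 ▸ card_le_card hTS
    rw [hempty, Nat.descFactorial_eq_zero_iff_lt.2 (show m < #T by omega)]
    simp

theorem card_filter_subset_powersetCard {K : Type*} [Field K] [CharZero K] (m : ℕ)
    (T : Finset α) :
    (#{S ∈ powersetCard m (univ : Finset α) | T ⊆ S} : K)
      = (Fintype.card α).choose m * m.descFactorial #T / (Fintype.card α).descFactorial #T := by
  have hT : (((Fintype.card α).descFactorial #T : ℕ) : K) ≠ 0 := by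
    exact_mod_cast (Nat.descFactorial_pos.2 (card_le_univ T)).ne'
  rw [eq_div_iff hT]
  exact_mod_cast card_filter_subset_powersetCard_mul_descFactorial m T

theorem sum_filter_subset_sum_mul (𝒮 : Finset (Finset α)) (T : Finset α)
    (a : α → R) (F : Finset α → R) :
    ∑ S ∈ 𝒮 with T ⊆ S, (∑ i ∈ S, a i) * F S
      = ∑ i, a i * ∑ S ∈ 𝒮 with insert i T ⊆ S, F S := by
  have hS : ∀ S : Finset α, (∑ i ∈ S, a i) * F S = ∑ i, if i ∈ S then a i * F S else 0 := by
    intro S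
    rw [sum_ite_mem, univ_inter, sum_mul]
  simp_rw [hS, mul_sum]
  rw [sum_comm]
  refine sum_congr rfl fun i _ => ?_
  rw [← sum_filter, filter_filter]
  simp_rw [insert_subset_iff, and_comm]

/-- `insertSum y w r T = ∑ l : Fin r → α, (∏ k, y (l k)) * w #(T ∪ univ.image l)`. -/
def insertSum (y : α → R) (w : ℕ → R) : ℕ → Finset α → R
  | 0, T => w #T
  | r + 1, T => ∑ l, y l * insertSum y w r (insert l T)

theorem sum_filter_subset_pow_sum (𝒮 : Finset (Finset α)) (w : ℕ → R)
    (hw : ∀ T : Finset α, (#{S ∈ 𝒮 | T ⊆ S} : R) = w #T) (y : α → R) (r : ℕ) (T : Finset α) :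
    ∑ S ∈ 𝒮 with T ⊆ S, (∑ i ∈ S, y i) ^ r = insertSum y w r T := by
  induction r generalizing T with
  | zero => simp [insertSum, hw]
  | succ r ih => simp_rw [pow_succ', sum_filter_subset_sum_mul, ih, insertSum]

theorem sum_compl_eq_sub (f : α → R) (T : Finset α) :
    ∑ l ∈ Tᶜ, f l = ∑ l, f l - ∑ l ∈ T, f l :=
  eq_sub_of_add_eq (sum_compl_add_sum T f)

theorem sum_mul_apply_insert (f : α → R) (g : Finset α → R) (T : Finset α) :
    ∑ l, f l * g (insert l T) = (∑ l ∈ T, f l) * g T + ∑ l ∈ Tᶜ, f l * g (insert l T) := by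
  rw [← sum_add_sum_compl T, sum_mul]
  congr 1
  exact sum_congr rfl fun l hl => by rw [insert_eq_self.2 hl]

theorem sum_mul_card_insert (f : α → R) (w : ℕ → R) (T : Finset α) :
    ∑ l, f l * w #(insert l T)
      = (∑ l ∈ T, f l) * w #T + (∑ l, f l - ∑ l ∈ T, f l) * w (#T + 1) := by
  have hcompl : ∀ l ∈ Tᶜ, f l * w #(insert l T) = f l * w (#T + 1) := fun l hl => by
    rw [card_insert_of_notMem (mem_compl.1 hl)]
  rw [sum_mul_apply_insert f (fun S => w #S), sum_congr rfl hcompl, ← sum_mul, sum_compl_eq_sub]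

section Centered

variable (y : α → R) (w : ℕ → R) (hy : ∑ i, y i = 0)
include hy

theorem insertSum_one (T : Finset α) :
    insertSum y w 1 T = (∑ l ∈ T, y l) * (w #T - w (#T + 1)) := by
  simp only [insertSum, sum_mul_card_insert, hy]
  ring

theorem insertSum_two (T : Finset α) :
    insertSum y w 2 T
      = (∑ l ∈ T, y l) ^ 2 * (w #T - w (#T + 1))
        + (∑ l, y l ^ 2 - ∑ l ∈ T, y l ^ 2 - (∑ l ∈ T, y l) ^ 2) * (w (#T + 1) - w (#T + 2)) := by
  have hcompl : ∀ l ∈ Tᶜ, y l * insertSum y w 1 (insert l T)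
      = (∑ k ∈ T, y k) * (w (#T + 1) - w (#T + 2)) * y l
        + (w (#T + 1) - w (#T + 2)) * y l ^ 2 := by
    intro l hl
    rw [insertSum_one y w hy, sum_insert (mem_compl.1 hl), card_insert_of_notMem (mem_compl.1 hl)]
    ring
  rw [insertSum, sum_mul_apply_insert, sum_congr rfl hcompl, sum_add_distrib, ← mul_sum,
    ← mul_sum, sum_compl_eq_sub, sum_compl_eq_sub, hy, insertSum_one y w hy]
  ring

theorem insertSum_three (T : Finset α) :
    insertSum y w 3 T
      = (∑ l ∈ T, y l) ^ 3 * (w #T - w (#T + 1))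
        + (3 * (∑ l ∈ T, y l) * (∑ l, y l ^ 2 - ∑ l ∈ T, y l ^ 2)
            - 2 * (∑ l ∈ T, y l) ^ 3 + (∑ l, y l ^ 3 - ∑ l ∈ T, y l ^ 3))
          * (w (#T + 1) - w (#T + 2))
        + ((∑ l ∈ T, y l) ^ 3 - 3 * (∑ l ∈ T, y l) * (∑ l, y l ^ 2 - ∑ l ∈ T, y l ^ 2)
            - 2 * (∑ l, y l ^ 3 - ∑ l ∈ T, y l ^ 3))
          * (w (#T + 2) - w (#T + 3)) := by
  have hcompl : ∀ l ∈ Tᶜ, y l * insertSum y w 2 (insert l T)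
      = ((∑ k ∈ T, y k) ^ 2 * (w (#T + 1) - w (#T + 2))
          + (∑ k, y k ^ 2 - ∑ k ∈ T, y k ^ 2 - (∑ k ∈ T, y k) ^ 2) * (w (#T + 2) - w (#T + 3)))
          * y l
        + 2 * (∑ k ∈ T, y k) * (w (#T + 1) - 2 * w (#T + 2) + w (#T + 3)) * y l ^ 2
        + (w (#T + 1) - 3 * w (#T + 2) + 2 * w (#T + 3)) * y l ^ 3 := by
    intro l hl
    rw [insertSum_two y w hy, sum_insert (mem_compl.1 hl), sum_insert (mem_compl.1 hl),
      card_insert_of_notMem (mem_compl.1 hl)]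
    ring
  rw [insertSum, sum_mul_apply_insert, sum_congr rfl hcompl, sum_add_distrib, sum_add_distrib,
    ← mul_sum, ← mul_sum, ← mul_sum, sum_compl_eq_sub, sum_compl_eq_sub, sum_compl_eq_sub, hy,
    insertSum_two y w hy]
  ring

end Centered

section Moments

variable (𝒮 : Finset (Finset α)) (w : ℕ → R)
  (hw : ∀ T : Finset α, (#{S ∈ 𝒮 | T ⊆ S} : R) = w #T) (y : α → R)
include hw

theorem sum_pow_sum_eq_insertSum (r : ℕ) :
    ∑ S ∈ 𝒮, (∑ i ∈ S, y i) ^ r = insertSum y w r ∅ := by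
  rw [← sum_filter_subset_pow_sum 𝒮 w hw, filter_true_of_mem fun S _ => empty_subset S]

theorem sum_sum_sq :
    ∑ S ∈ 𝒮, ∑ i ∈ S, y i ^ 2 = (∑ i, y i ^ 2) * w 1 := by
  simpa [insertSum, sum_mul_card_insert, sum_mul] using
    sum_pow_sum_eq_insertSum 𝒮 w hw (fun i => y i ^ 2) 1

theorem sum_sq_sum_sq :
    ∑ S ∈ 𝒮, (∑ i ∈ S, y i ^ 2) ^ 2
      = (∑ i, y i ^ 4) * w 1 + ((∑ i, y i ^ 2) ^ 2 - ∑ i, y i ^ 4) * w 2 := by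
  rw [sum_pow_sum_eq_insertSum 𝒮 w hw (fun i => y i ^ 2)]
  simp only [insertSum, insert_empty, sum_mul_card_insert, card_singleton, sum_singleton]
  have hpt : ∀ i, y i ^ 2 * (y i ^ 2 * w 1 + (∑ l, y l ^ 2 - y i ^ 2) * w (1 + 1))
      = y i ^ 4 * (w 1 - w 2) + y i ^ 2 * ((∑ l, y l ^ 2) * w 2) := fun i => by ring
  rw [sum_congr rfl fun i _ => hpt i, sum_add_distrib, ← sum_mul, ← sum_mul]
  ring

variable (hy : ∑ i, y i = 0)
include hy

theorem sum_sq_sum :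
    ∑ S ∈ 𝒮, (∑ i ∈ S, y i) ^ 2 = (∑ i, y i ^ 2) * (w 1 - w 2) := by
  rw [sum_pow_sum_eq_insertSum 𝒮 w hw, insertSum_two y w hy]
  simp

theorem sum_sum_sq_mul_sq_sum :
    ∑ S ∈ 𝒮, (∑ i ∈ S, y i ^ 2) * (∑ i ∈ S, y i) ^ 2
      = (∑ i, y i ^ 2) ^ 2 * (w 2 - w 3) + (∑ i, y i ^ 4) * (w 1 - 3 * w 2 + 2 * w 3) := by
  rw [← filter_true_of_mem (s := 𝒮) (p := (∅ ⊆ ·)) fun S _ => empty_subset S,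
    sum_filter_subset_sum_mul]
  simp_rw [sum_filter_subset_pow_sum 𝒮 w hw]
  simp only [insertSum_two y w hy, insert_empty, card_singleton, sum_singleton]
  have hpt : ∀ i, y i ^ 2 * ((y i) ^ 2 * (w 1 - w (1 + 1))
        + (∑ l, y l ^ 2 - y i ^ 2 - y i ^ 2) * (w (1 + 1) - w (1 + 2)))
      = y i ^ 4 * (w 1 - 3 * w 2 + 2 * w 3) + y i ^ 2 * ((∑ l, y l ^ 2) * (w 2 - w 3)) :=
    fun i => by ring
  rw [sum_congr rfl fun i _ => hpt i, sum_add_distrib, ← sum_mul, ← sum_mul]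
  ring

theorem sum_pow_four_sum :
    ∑ S ∈ 𝒮, (∑ i ∈ S, y i) ^ 4
      = (∑ i, y i ^ 2) ^ 2 * (3 * (w 2 - 2 * w 3 + w 4))
        + (∑ i, y i ^ 4) * (w 1 - 7 * w 2 + 12 * w 3 - 6 * w 4) := by
  rw [sum_pow_sum_eq_insertSum 𝒮 w hw, insertSum]
  simp only [insertSum_three y w hy, insert_empty, card_singleton, sum_singleton]
  have hpt : ∀ i, y i * (y i ^ 3 * (w 1 - w (1 + 1))
        + (3 * y i * (∑ l, y l ^ 2 - y i ^ 2) - 2 * y i ^ 3 + (∑ l, y l ^ 3 - y i ^ 3))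
          * (w (1 + 1) - w (1 + 2))
        + (y i ^ 3 - 3 * y i * (∑ l, y l ^ 2 - y i ^ 2) - 2 * (∑ l, y l ^ 3 - y i ^ 3))
          * (w (1 + 2) - w (1 + 3)))
      = y i ^ 4 * (w 1 - 7 * w 2 + 12 * w 3 - 6 * w 4)
        + y i ^ 2 * (3 * (∑ l, y l ^ 2) * (w 2 - 2 * w 3 + w 4))
        + y i * ((∑ l, y l ^ 3) * (w 2 - 3 * w 3 + 2 * w 4)) := fun i => by ring
  rw [sum_congr rfl fun i _ => hpt i, sum_add_distrib, sum_add_distrib, ← sum_mul, ← sum_mul,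
    ← sum_mul, hy]
  ring

theorem sum_mul_sum_sq_sub_sq_sum (c : R) :
    ∑ S ∈ 𝒮, (c * ∑ i ∈ S, y i ^ 2 - (∑ i ∈ S, y i) ^ 2)
      = (∑ i, y i ^ 2) * ((c - 1) * w 1 + w 2) := by
  rw [sum_sub_distrib, ← mul_sum, sum_sum_sq 𝒮 w hw, sum_sq_sum 𝒮 w hw y hy]
  ring

theorem sum_mul_sum_sq_sub_sq_sum_sq (c : R) :
    ∑ S ∈ 𝒮, (c * ∑ i ∈ S, y i ^ 2 - (∑ i ∈ S, y i) ^ 2) ^ 2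
      = c ^ 2 * ((∑ i, y i ^ 4) * w 1 + ((∑ i, y i ^ 2) ^ 2 - ∑ i, y i ^ 4) * w 2)
        - 2 * c * ((∑ i, y i ^ 2) ^ 2 * (w 2 - w 3) + (∑ i, y i ^ 4) * (w 1 - 3 * w 2 + 2 * w 3))
        + ((∑ i, y i ^ 2) ^ 2 * (3 * (w 2 - 2 * w 3 + w 4))
          + (∑ i, y i ^ 4) * (w 1 - 7 * w 2 + 12 * w 3 - 6 * w 4)) := by
  have hpt : ∀ S : Finset α, (c * ∑ i ∈ S, y i ^ 2 - (∑ i ∈ S, y i) ^ 2) ^ 2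
      = c ^ 2 * (∑ i ∈ S, y i ^ 2) ^ 2 - 2 * c * ((∑ i ∈ S, y i ^ 2) * (∑ i ∈ S, y i) ^ 2)
        + (∑ i ∈ S, y i) ^ 4 := fun S => by ring
  rw [sum_congr rfl fun S _ => hpt S, sum_add_distrib, sum_sub_distrib, ← mul_sum, ← mul_sum,
    sum_sq_sum_sq 𝒮 w hw, sum_sum_sq_mul_sq_sum 𝒮 w hw y hy, sum_pow_four_sum 𝒮 w hw y hy]

end Moments

end Sampling

theorem srs_second_central_moment_variance (N m : ℕ) (h1 : 2 ≤ m) (h2 : m ≤ N)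
    (h3 : 3 < N) (x : Fin N → ℝ) :
    (∑ S ∈ Finset.powersetCard m (Finset.univ : Finset (Fin N)),
        ((∑ i ∈ S, (x i - (∑ j ∈ S, x j) / (m : ℝ)) ^ 2) / (m : ℝ)
          - (∑ T ∈ Finset.powersetCard m (Finset.univ : Finset (Fin N)),
              (∑ i ∈ T, (x i - (∑ j ∈ T, x j) / (m : ℝ)) ^ 2) / (m : ℝ))
            / ((Finset.powersetCard m (Finset.univ : Finset (Fin N))).card : ℝ)) ^ 2)
      / ((Finset.powersetCard m (Finset.univ : Finset (Fin N))).card : ℝ)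
    = (((m : ℝ) - 1) * (N : ℝ) * ((N : ℝ) - m))
        / ((m : ℝ) ^ 3 * ((N : ℝ) - 1) ^ 2 * ((N : ℝ) - 2) * ((N : ℝ) - 3))
      * (((m : ℝ) * N - N - m - 1) * ((N : ℝ) - 1)
            * ((∑ i, (x i - (∑ j, x j) / (N : ℝ)) ^ 4) / (N : ℝ))
        - ((m : ℝ) * (N : ℝ) ^ 2 - 3 * (N : ℝ) ^ 2 + 6 * N - 3 * m - 3)
            * ((∑ i, (x i - (∑ j, x j) / (N : ℝ)) ^ 2) / (N : ℝ)) ^ 2) := by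
  obtain ⟨y, hy_def⟩ : ∃ y : Fin N → ℝ, y = fun i => x i - (∑ j, x j) / N := ⟨_, rfl⟩
  have hxy : ∀ i, x i - (∑ j, x j) / N = y i := fun i => by rw [hy_def]
  have hN : (N : ℝ) ≠ 0 := by exact_mod_cast (by omega : N ≠ 0)
  have hy : ∑ i, y i = 0 := by simp [hy_def, sum_sub_distrib, mul_div_cancel₀ _ hN]
  have hM₂ : ∀ S ∈ powersetCard m (univ : Finset (Fin N)),
      (∑ i ∈ S, (x i - (∑ j ∈ S, x j) / m) ^ 2) / m
        = (m * ∑ i ∈ S, y i ^ 2 - (∑ i ∈ S, y i) ^ 2) / m ^ 2 := by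
    intro S hS
    obtain rfl := mem_powersetCard_univ.1 hS
    simpa only [hxy] using sum_sub_average_sq_div_card S x ((∑ j, x j) / N)
  let w : ℕ → ℝ := fun k => N.choose m * m.descFactorial k / N.descFactorial k
  have hw : ∀ T : Finset (Fin N), (#{S ∈ powersetCard m univ | T ⊆ S} : ℝ) = w #T := by
    simpa using card_filter_subset_powersetCard (α := Fin N) m
  rw [sum_sub_average_sq_div_card _ _ 0]
  simp only [sub_zero, hxy]
  rw [sum_congr rfl hM₂, sum_congr rfl fun S hS => by rw [hM₂ S hS]]
  simp only [div_pow, ← sum_div]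
  rw [sum_mul_sum_sq_sub_sq_sum_sq _ w hw y hy, sum_mul_sum_sq_sub_sq_sum _ w hw y hy]
  simp only [w, Nat.cast_descFactorial_eq_prod_range, prod_range_succ, prod_range_zero,
    card_powersetCard, card_univ, Fintype.card_fin, Nat.cast_zero, Nat.cast_one, Nat.cast_ofNat]
  have hm : (m : ℝ) ≠ 0 := by exact_mod_cast (by omega : m ≠ 0)
  have hK : (N.choose m : ℝ) ≠ 0 := by exact_mod_cast (Nat.choose_pos h2).ne'
  have hN₁ : (N : ℝ) - 1 ≠ 0 := sub_ne_zero.2 (by exact_mod_cast (by omega : N ≠ 1))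
  have hN₂ : (N : ℝ) - 2 ≠ 0 := sub_ne_zero.2 (by exact_mod_cast (by omega : N ≠ 2))
  have hN₃ : (N : ℝ) - 3 ≠ 0 := sub_ne_zero.2 (by exact_mod_cast (by omega : N ≠ 3))
  field_simp
  ring
end
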